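/- Fix nonnegative integers k, x₀, ℓ with 2k ≤ ℓ. For y with ℓ − 2x₀ ≤ y ≤ ℓ + 2k − 1 − 2x₀ and y ≥ 0, let z = ℓ − x₀ − y, t = 2x₀ + y + 1 − ℓ, r = t + 2k, and define F(y) = Σ_{i=t}^{x₀} Σ_{j=r−2i}^{2k−i} (x₀ choose i)·(y choose j)·(z choose (2k−i−j)) (binomials are 0 for out-of-range indices). Then F(y+1) ≤ F(y). -/

import Mathlib

/-- Binomial coefficient on integers: `0` when the lower index is negative or
exceeds the upper index. -/
def ichoose (p q : ℤ) : ℤ :=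
  if q < 0 ∨ p < q then 0 else (p.toNat).choose q.toNat

/-- With `z = ℓ−x₀−y`, `t = 2x₀+y+1−ℓ`, `r = t+2k`:
`F(y) = Σ_{i=t}^{x₀} Σ_{j=r−2i}^{2k−i} (x₀ choose i)(y choose j)(z choose 2k−i−j)`. -/
noncomputable def F (k x₀ ℓ y : ℕ) : ℤ :=
  ∑ i ∈ Finset.Icc ((2 * x₀ + y + 1 : ℤ) - ℓ) (x₀ : ℤ),
    ∑ j ∈ Finset.Icc ((2 * x₀ + y + 1 : ℤ) - ℓ + 2 * k - 2 * i) ((2 * k : ℤ) - i),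
      ichoose x₀ i * ichoose y j * ichoose ((ℓ : ℤ) - x₀ - y) ((2 * k : ℤ) - i - j)

/-!
Write `F(y) = Σ_i C(x₀,i) Σ_{j=r-2i}^{2k-i} C(y,j) C(z,2k-i-j)`. Passing from `y` to `y+1` raises
`t` and `r` by one and replaces `(y, z)` by `(y+1, z-1)`. Pascal's rule on `C(y+1,j)` and `C(z,·)`
telescopes each inner sum, and the inner sum for `i = t` becomes empty, so
`F(y) - F(y+1) = Σ_i C(x₀,i) C(y,r-2i) C(z-1,2k+i-r) ≥ 0`.
-/

open Finset

lemma ichoose_nonneg (p q : ℤ) : 0 ≤ ichoose p q := by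
  unfold ichoose
  split_ifs <;> positivity

lemma ichoose_of_neg (p : ℤ) {q : ℤ} (hq : q < 0) : ichoose p q = 0 := by
  simp [ichoose, hq]

lemma ichoose_natCast (n m : ℕ) : ichoose n m = n.choose m := by
  unfold ichoose
  split_ifs with h
  · rw [Nat.choose_eq_zero_of_lt (by omega), Nat.cast_zero]
  · simp

lemma ichoose_add_one {p : ℤ} (hp : 0 ≤ p) (q : ℤ) :
    ichoose (p + 1) q = ichoose p q + ichoose p (q - 1) := by
  lift p to ℕ using hp
  rcases lt_or_ge q 0 with hq | hq
  · simp [ichoose_of_neg _ hq, ichoose_of_neg _ (show q - 1 < 0 by omega)]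
  lift q to ℕ using hq
  have hcast := ichoose_natCast (p + 1) q
  push_cast at hcast
  rw [hcast, ichoose_natCast]
  cases q with
  | zero => simp [ichoose_of_neg]
  | succ m =>
    rw [Nat.cast_succ, add_sub_cancel_right, ichoose_natCast, Nat.choose_succ_succ']
    push_cast
    ring

lemma sum_Icc_ichoose_mul_ichoose_add_one {y z : ℤ} (hy : 0 ≤ y) (hz : 0 ≤ z) (a s : ℤ) :
    ∑ j ∈ Icc a s, ichoose y j * ichoose (z + 1) (s - j) =
      ∑ j ∈ Icc (a + 1) s, ichoose (y + 1) j * ichoose z (s - j) +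
        ichoose y a * ichoose z (s - a) := by
  obtain h | h := le_or_gt a s
  · induction a, h using Int.leInductionDown with
    | base => simp [ichoose_add_one hz 0, ichoose_of_neg]
    | pred a has ih =>
      rw [← insert_Icc_add_one_left_eq_Icc (by omega : a - 1 ≤ s), sub_add_cancel,
        sum_insert (by simp), ih, ← insert_Icc_add_one_left_eq_Icc has,
        sum_insert (by simp), ichoose_add_one hz, ichoose_add_one hy,
        show s - (a - 1) - 1 = s - a by ring]
      ring
  · simp [Icc_eq_empty_of_lt h, Icc_eq_empty_of_lt (h.trans (lt_add_one a)),
      ichoose_of_neg z (show s - a < 0 by omega)]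

noncomputable def tailSum (n m c t y z : ℤ) : ℤ :=
  ∑ i ∈ Icc t m, ∑ j ∈ Icc (t + c - 2 * i) (c - i),
    ichoose n i * ichoose y j * ichoose z (c - i - j)

lemma tailSum_add_one_le (n m c t : ℤ) {y z : ℤ} (hy : 0 ≤ y) (hz : 0 ≤ z) :
    tailSum n m c (t + 1) (y + 1) z ≤ tailSum n m c t y (z + 1) := by
  have step : ∀ i, ∑ j ∈ Icc (t + c - 2 * i) (c - i),
      ichoose n i * ichoose y j * ichoose (z + 1) (c - i - j) =
        ∑ j ∈ Icc (t + 1 + c - 2 * i) (c - i),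
          ichoose n i * ichoose (y + 1) j * ichoose z (c - i - j) +
        ichoose n i * (ichoose y (t + c - 2 * i) * ichoose z (i - t)) := fun i => by
    simp only [mul_assoc, ← mul_sum]
    rw [sum_Icc_ichoose_mul_ichoose_add_one hy hz, mul_add,
      show t + c - 2 * i + 1 = t + 1 + c - 2 * i by ring,
      show c - i - (t + c - 2 * i) = i - t by ring]
  -- at `i = t` the inner range of the left-hand side is empty
  have drop_bottom : ∑ i ∈ Icc t m, ∑ j ∈ Icc (t + 1 + c - 2 * i) (c - i),
      ichoose n i * ichoose (y + 1) j * ichoose z (c - i - j) =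
        tailSum n m c (t + 1) (y + 1) z := by
    refine (sum_subset (Icc_subset_Icc_left (lt_add_one t).le) fun i hi hi' => ?_).symm
    rw [Icc_eq_empty (by simp only [mem_Icc] at hi hi'; omega), sum_empty]
  unfold tailSum
  rw [sum_congr rfl fun i _ => step i, sum_add_distrib, drop_bottom]
  exact le_add_of_nonneg_right <| sum_nonneg fun i _ =>
    mul_nonneg (ichoose_nonneg _ _) (mul_nonneg (ichoose_nonneg _ _) (ichoose_nonneg _ _))

theorem stmt_5_general (k x₀ ℓ y : ℕ) : F k x₀ ℓ (y + 1) ≤ F k x₀ ℓ y := by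
  have F_eq_tailSum : ∀ y : ℕ,
      F k x₀ ℓ y = tailSum x₀ x₀ (2 * k) (2 * x₀ + y + 1 - ℓ) y (ℓ - x₀ - y) := fun _ => rfl
  rcases lt_or_ge (ℓ : ℤ) (x₀ + y + 1) with hℓ | hℓ
  · have vanish : ∀ y' : ℕ, y ≤ y' → F k x₀ ℓ y' = 0 := fun y' hy' => by
      rw [F, Icc_eq_empty (by omega), sum_empty]
    rw [vanish _ (Nat.le_succ y), vanish _ le_rfl]
  · have h := tailSum_add_one_le x₀ x₀ (2 * k) (2 * x₀ + y + 1 - ℓ) (y := y)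
      (z := ℓ - x₀ - y - 1) (Int.natCast_nonneg y) (by omega)
    rw [F_eq_tailSum, F_eq_tailSum]
    convert h using 2 <;> push_cast <;> ring

theorem stmt_5 (k x₀ ℓ y : ℕ) (hkℓ : 2 * k ≤ ℓ)
    (hy1 : ℓ - 2 * x₀ ≤ y) (hy2 : y + 2 * x₀ + 1 ≤ ℓ + 2 * k) :
    F k x₀ ℓ (y + 1) ≤ F k x₀ ℓ y :=
  stmt_5_general k x₀ ℓ y
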